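/- arXiv:1805.10250 — 2 statements merged into one kernel-verified Lean document; each statement's English description precedes it below -/
import Mathlib

section
/- Let O be an ontology and let O^pin be the pinpointing state labelling each axiom α ∈ O with its variable lab(α). If O^pin ⇀* A^pin by pinpointing rule applications, then: (i) every label occurring in A^pin is satisfied by the full valuation V_⊤ consisting of all propositional variables, and (ii) the underlying state A of A^pin is reachable from O by classical rule applications (O →* A); in particular, the pinpointing extension derives exactly the same consequences as classical rule application. -/
/-- Monotone Boolean formulas over propositional variables of type `V`. -/
inductive MBF (V : Type) : Type
  | var : V → MBF V
  | top : MBF V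
  | bot : MBF V
  | and : MBF V → MBF V → MBF V
  | or  : MBF V → MBF V → MBF V

/-- Satisfaction of a monotone Boolean formula by a valuation (a set of variables). -/
def MBF.sat {V : Type} (v : Set V) : MBF V → Prop
  | .var p => p ∈ v
  | .top => True
  | .bot => False
  | .and φ ψ => φ.sat v ∧ ψ.sat v
  | .or φ ψ => φ.sat v ∨ ψ.sat v

/-- `φ` entails `ψ`: every valuation satisfying `φ` satisfies `ψ`. -/
def MBF.entails {V : Type} (φ ψ : MBF V) : Prop :=
  ∀ v : Set V, φ.sat v → ψ.sat v

/-- A rule: a pair of finite sets of consequences (premises and results). -/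
structure Rule (C : Type) where
  pre : Finset C
  res : Finset C

/-- A rule `R` is applicable to a state `A` if `pre R ⊆ A` and `res R ⊄ A`. -/
def applicable {C : Type} (R : Rule C) (A : Set C) : Prop :=
  ↑R.pre ⊆ A ∧ ¬ (↑R.res ⊆ A)

/-- Classical rule application: `A →_R B`. -/
def step {C : Type} (R : Rule C) (A B : Set C) : Prop :=
  applicable R A ∧ B = A ∪ ↑R.res

/-- One step with some rule from the fixed set of rules `Rs`. -/
def stepAny {C : Type} (Rs : Set (Rule C)) (A B : Set C) : Prop :=
  ∃ R ∈ Rs, step R A B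

/-- Reflexive-transitive closure of classical rule application: `A →* B`. -/
def steps {C : Type} (Rs : Set (Rule C)) : Set C → Set C → Prop :=
  Relation.ReflTransGen (stepAny Rs)

/-- A state is saturated if no rule (from `Rs`) is applicable to it. -/
def saturated {C : Type} (Rs : Set (Rule C)) (A : Set C) : Prop :=
  ∀ R ∈ Rs, ¬ applicable R A

/-- A pinpointing state: a labelling of a finite set of consequences with
monotone Boolean formulas (`none` = unlabelled). -/
structure PState (C V : Type) where
  lab : C → Option (MBF V)
  finite : {c : C | lab c ≠ none}.Finite

/-- The label of `α` in `A`, which is `⊥` if `α` is unlabelled. -/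
def PState.labOf {C V : Type} (A : PState C V) (α : C) : MBF V :=
  (A.lab α).getD .bot

/-- `fm(X, A)`: the conjunction of the labels of the elements of `X`. -/
noncomputable def fm {C V : Type} (X : Finset C) (A : PState C V) : MBF V :=
  (X.toList.map A.labOf).foldr .and .top

/-- `R` is pinpointing applicable to `A` if `fm(pre R, A)` does not entail `fm(res R, A)`. -/
def pinApplicable {C V : Type} (R : Rule C) (A : PState C V) : Prop :=
  ¬ (fm R.pre A).entails (fm R.res A)

open Classical in
/-- Pinpointing rule application `A ⇀_R B`: each `α ∈ res R` is relabelled with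
`φ_α ∨ fm(pre R, A)` (with `φ_α = ⊥` if `α` was unlabelled); all other labels unchanged. -/
def pinStep {C V : Type} (R : Rule C) (A B : PState C V) : Prop :=
  pinApplicable R A ∧
  ∀ α : C, B.lab α =
    if α ∈ R.res then some ((A.labOf α).or (fm R.pre A)) else A.lab α

/-- One pinpointing step with some rule from `Rs`. -/
def pinStepAny {C V : Type} (Rs : Set (Rule C)) (A B : PState C V) : Prop :=
  ∃ R ∈ Rs, pinStep R A B

/-- Reflexive-transitive closure of pinpointing rule application: `A ⇀* B`. -/
def pinSteps {C V : Type} (Rs : Set (Rule C)) : PState C V → PState C V → Prop :=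
  Relation.ReflTransGen (pinStepAny Rs)

/-- A pinpointing state is pinpointing saturated if no rule is pinpointing applicable. -/
def pinSaturated {C V : Type} (Rs : Set (Rule C)) (A : PState C V) : Prop :=
  ∀ R ∈ Rs, ¬ pinApplicable R A

/-- The projection `A_V` of a pinpointing state under a valuation `v`. -/
def PState.proj {C V : Type} (A : PState C V) (v : Set V) : Set C :=
  {α | ∃ φ, A.lab α = some φ ∧ φ.sat v}

open Classical in
/-- `O^pin`: the initial pinpointing state labelling each axiom `α ∈ O` with the
propositional variable `labv α`. -/
noncomputable def initPState {C V : Type} (labv : C → V) (O : Finset C) : PState C V :=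
  ⟨fun α => if α ∈ O then some (.var (labv α)) else none,
   Set.Finite.subset O.finite_toSet (by
     intro c hc
     simp only [Set.mem_setOf_eq, ne_eq, ite_eq_right_iff, not_forall] at hc
     exact hc.choose)⟩


lemma foldr_sat {V : Type} (v : Set V) (l : List (MBF V)) :
    (l.foldr MBF.and MBF.top).sat v ↔ ∀ φ ∈ l, φ.sat v := by
  induction l with
  | nil => simp [MBF.sat]
  | cons a l ih => simp [MBF.sat, ih]

lemma fm_sat {C V : Type} (v : Set V) (X : Finset C) (A : PState C V) :
    (fm X A).sat v ↔ ∀ α ∈ X, (A.labOf α).sat v := by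
  rw [fm, foldr_sat]
  simp

/-- If `O^pin ⇀* A^pin`, then (i) every label occurring in `A^pin` is
satisfied by the full valuation, and (ii) the underlying state of `A^pin` is
reachable from `O` by classical rule applications. -/
theorem stmt2 {C V : Type} (Rs : Set (Rule C)) (labv : C → V)
    (hinj : Function.Injective labv) (O : Finset C) (Apin : PState C V)
    (h : pinSteps Rs (initPState labv O) Apin) :
    (∀ (α : C) (φ : MBF V), Apin.lab α = some φ → φ.sat Set.univ) ∧
    steps Rs ↑O {α : C | ∃ φ, Apin.lab α = some φ} := by
  induction h with
  | refl =>
      constructor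
      · intro α φ hφ
        simp only [initPState] at hφ
        split at hφ
        · cases hφ; trivial
        · cases hφ
      · have : {α : C | ∃ φ, (initPState labv O).lab α = some φ} = ↑O := by
          ext α
          simp only [Set.mem_setOf_eq, initPState, Finset.coe_mem, Finset.mem_coe]
          constructor
          · rintro ⟨φ, hφ⟩
            by_contra hα
            simp [hα] at hφ
          · intro hα; exact ⟨MBF.var (labv α), by simp [initPState, hα]⟩
        rw [this]
        exact Relation.ReflTransGen.refl
  | tail hbc hstep ih =>
      rename_i b c
      obtain ⟨hsat, hreach⟩ := ih
      obtain ⟨R, hR, happ, hlab⟩ := hstep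
      obtain ⟨v, hv1, hv2⟩ : ∃ v : Set V, (fm R.pre b).sat v ∧ ¬ (fm R.res b).sat v := by
        simpa [pinApplicable, MBF.entails, not_forall] using happ
      -- every α ∈ pre is labelled in b
      have hpre : ∀ α ∈ R.pre, ∃ φ, b.lab α = some φ := by
        intro α hα
        have := (fm_sat v R.pre b).1 hv1 α hα
        cases hb : b.lab α with
        | none => simp [PState.labOf, hb, MBF.sat] at this
        | some φ => exact ⟨φ, rfl⟩
      have hsatpre : (fm R.pre b).sat Set.univ := by
        rw [fm_sat]
        intro α hα
        obtain ⟨φ, hφ⟩ := hpre α hα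
        simpa [PState.labOf, hφ] using hsat α φ hφ
      have hsat' : ∀ (α : C) (φ : MBF V), c.lab α = some φ → φ.sat Set.univ := by
        intro α φ hφ
        rw [hlab α] at hφ
        split at hφ
        · cases hφ
          exact Or.inr hsatpre
        · exact hsat α φ hφ
      refine ⟨hsat', ?_⟩
      have hset : {α : C | ∃ φ, c.lab α = some φ}
          = {α : C | ∃ φ, b.lab α = some φ} ∪ ↑R.res := by
        ext α
        simp only [Set.mem_setOf_eq, Set.mem_union, Finset.mem_coe, hlab α]
        by_cases hα : α ∈ R.res <;> simp [hα]
      rw [hset]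
      by_cases hres : ↑R.res ⊆ {α : C | ∃ φ, b.lab α = some φ}
      · rwa [Set.union_eq_self_of_subset_right hres]
      · refine Relation.ReflTransGen.tail hreach ⟨R, hR, ?_, rfl⟩
        refine ⟨?_, hres⟩
        intro α hα
        exact hpre α hα
end

section
/- For every ALC TBox T (a finite set of GCIs, each labelled with a unique propositional variable) and all ALC concepts C and D, there exists a pinpointing formula for C ⊑ D w.r.t. T, i.e., a monotone Boolean formula φ over the labels of T such that for every valuation V: T_V ⊨ C ⊑ D if and only if V satisfies φ. -/
/-- ALC concepts over concept names `Cn` and role names `Rn`: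
`C ::= A | ¬C | C ⊓ C | ∃r.C`. -/
inductive AConcept (Cn Rn : Type) : Type
  | atom : Cn → AConcept Cn Rn
  | neg : AConcept Cn Rn → AConcept Cn Rn
  | inter : AConcept Cn Rn → AConcept Cn Rn → AConcept Cn Rn
  | ex : Rn → AConcept Cn Rn → AConcept Cn Rn

/-- The abbreviation `∀r.C := ¬∃r.¬C`. -/
def AConcept.all {Cn Rn : Type} (r : Rn) (c : AConcept Cn Rn) : AConcept Cn Rn :=
  .neg (.ex r (.neg c))

/-- The abbreviation `⊥ := A ⊓ ¬A` (for a concept name `A`). -/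
def AConcept.bott {Cn Rn : Type} (A : Cn) : AConcept Cn Rn :=
  .inter (.atom A) (.neg (.atom A))

/-- An interpretation `I = (Δ^I, ·^I)`. -/
structure Interp (Cn Rn : Type) where
  Dom : Type
  ic : Cn → Set Dom
  ir : Rn → Set (Dom × Dom)

/-- The extension `C^I ⊆ Δ^I` of a concept. -/
def AConcept.interp {Cn Rn : Type} (I : Interp Cn Rn) : AConcept Cn Rn → Set I.Dom
  | .atom A => I.ic A
  | .neg c => (c.interp I)ᶜ
  | .inter c d => c.interp I ∩ d.interp I
  | .ex r c => {x : I.Dom | ∃ y ∈ c.interp I, (x, y) ∈ I.ir r}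

/-- A general concept inclusion (GCI) `C ⊑ D`. -/
structure GCI (Cn Rn : Type) where
  lhs : AConcept Cn Rn
  rhs : AConcept Cn Rn

/-- `I` satisfies the GCI `C ⊑ D` iff `C^I ⊆ D^I`. -/
def Interp.satisfies {Cn Rn : Type} (I : Interp Cn Rn) (g : GCI Cn Rn) : Prop :=
  g.lhs.interp I ⊆ g.rhs.interp I

/-- `I` is a model of `T` iff it satisfies all GCIs in `T`. -/
def Interp.isModel {Cn Rn : Type} (I : Interp Cn Rn) (T : Set (GCI Cn Rn)) : Prop :=
  ∀ g ∈ T, I.satisfies g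

/-- `T ⊨ C ⊑ D` iff every model of `T` satisfies `C ⊑ D`. -/
def TEntails {Cn Rn : Type} (T : Set (GCI Cn Rn)) (g : GCI Cn Rn) : Prop :=
  ∀ I : Interp Cn Rn, I.isModel T → I.satisfies g

/-- The axiom `a1 : A ⊑ ∃r.A`. -/
def axm1 {Cn Rn : Type} (A : Cn) (r : Rn) : GCI Cn Rn :=
  ⟨.atom A, .ex r (.atom A)⟩

/-- The axiom `a2 : ∃r.A ⊑ B`. -/
def axm2 {Cn Rn : Type} (A B : Cn) (r : Rn) : GCI Cn Rn :=
  ⟨.ex r (.atom A), .atom B⟩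

/-- The axiom `a3 : A ⊑ ∀r.B`. -/
def axm3 {Cn Rn : Type} (A B : Cn) (r : Rn) : GCI Cn Rn :=
  ⟨.atom A, AConcept.all r (.atom B)⟩

/-- The axiom `a4 : A ⊓ B ⊑ ⊥`. -/
def axm4 {Cn Rn : Type} (A B : Cn) : GCI Cn Rn :=
  ⟨.inter (.atom A) (.atom B), AConcept.bott A⟩

/-- The example TBox `T_exa = {A ⊑ ∃r.A, ∃r.A ⊑ B, A ⊑ ∀r.B, A ⊓ B ⊑ ⊥}`. -/
def Texa {Cn Rn : Type} (A B : Cn) (r : Rn) : Set (GCI Cn Rn) :=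
  {axm1 A r, axm2 A B r, axm3 A B r, axm4 A B}

/-- The set of propositional variables occurring in a monotone Boolean formula. -/
def MBF.vars {V : Type} : MBF V → Set V
  | .var p => {p}
  | .top => ∅
  | .bot => ∅
  | .and φ ψ => φ.vars ∪ ψ.vars
  | .or φ ψ => φ.vars ∪ ψ.vars

def conjList {V : Type} : List V → MBF V
  | [] => .top
  | p :: l => .and (.var p) (conjList l)

lemma conjList_sat {V : Type} (v : Set V) : ∀ l : List V, (conjList l).sat v ↔ ∀ p ∈ l, p ∈ v
  | [] => by simp [conjList, MBF.sat]
  | p :: l => by simp [conjList, MBF.sat, conjList_sat v l]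

lemma conjList_vars {V : Type} : ∀ l : List V, (conjList l).vars ⊆ {p | p ∈ l}
  | [] => by simp [conjList, MBF.vars]
  | p :: l => by
      simp only [conjList, MBF.vars]
      intro x hx
      rcases hx with hx | hx
      · simp_all
      · have := conjList_vars l hx; simp_all

def orList {V : Type} : List (MBF V) → MBF V
  | [] => .bot
  | φ :: l => .or φ (orList l)

lemma orList_sat {V : Type} (v : Set V) : ∀ l : List (MBF V), (orList l).sat v ↔ ∃ φ ∈ l, φ.sat v
  | [] => by simp [orList, MBF.sat]
  | φ :: l => by simp [orList, MBF.sat, orList_sat v l]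

lemma orList_vars {V : Type} : ∀ l : List (MBF V), ∀ x ∈ (orList l).vars, ∃ φ ∈ l, x ∈ φ.vars
  | [] => by simp [orList, MBF.vars]
  | φ :: l => by
      intro x hx
      rcases hx with hx | hx
      · exact ⟨φ, by simp, hx⟩
      · obtain ⟨ψ, hψ, hxψ⟩ := orList_vars l x hx
        exact ⟨ψ, by simp [hψ], hxψ⟩

lemma tentails_mono {Cn Rn : Type} {T₁ T₂ : Set (GCI Cn Rn)} (h : T₁ ⊆ T₂)
    {g : GCI Cn Rn} (he : TEntails T₁ g) : TEntails T₂ g := by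
  intro I hI
  exact he I (fun a ha => hI a (h ha))

/-- for every ALC TBox `T` (a finite set of GCIs, each labelled with a
unique propositional variable) and all concepts `C`, `D`, there exists a pinpointing
formula for `C ⊑ D` w.r.t. `T`: a monotone Boolean formula `φ` over the labels of `T`
such that for every valuation `v`, `T_v ⊨ C ⊑ D` iff `v` satisfies `φ`. -/
theorem stmt13 {Cn Rn V : Type} (T : Set (GCI Cn Rn)) (hfin : T.Finite)
    (lab : GCI Cn Rn → V) (hinj : Set.InjOn lab T)
    (C D : AConcept Cn Rn) :
    ∃ φ : MBF V, φ.vars ⊆ lab '' T ∧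
      ∀ v : Set V,
        (TEntails {g : GCI Cn Rn | g ∈ T ∧ lab g ∈ v} ⟨C, D⟩ ↔ φ.sat v) := by
  classical
  let Tf := hfin.toFinset
  have hTf : (Tf : Set (GCI Cn Rn)) = T := hfin.coe_toFinset
  let mk : Finset (GCI Cn Rn) → MBF V := fun S =>
    if TEntails (S : Set (GCI Cn Rn)) ⟨C, D⟩ then conjList (S.toList.map lab) else .bot
  refine ⟨orList (Tf.powerset.toList.map mk), ?_, ?_⟩
  · intro x hx
    obtain ⟨φ, hφ, hxφ⟩ := orList_vars _ x hx
    simp only [List.mem_map, Finset.mem_toList, Finset.mem_powerset] at hφ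
    obtain ⟨S, hS, rfl⟩ := hφ
    by_cases he : TEntails (S : Set (GCI Cn Rn)) ⟨C, D⟩
    · simp only [mk, if_pos he] at hxφ
      have := conjList_vars _ hxφ
      simp only [Set.mem_setOf_eq, List.mem_map, Finset.mem_toList] at this
      obtain ⟨g, hg, rfl⟩ := this
      exact ⟨g, by rw [← hTf]; exact_mod_cast hS hg, rfl⟩
    · simp [mk, if_neg he, MBF.vars] at hxφ
  · intro v
    rw [orList_sat]
    constructor
    · intro he
      refine ⟨mk (Tf.filter (fun g => lab g ∈ v)), ?_, ?_⟩
      · simp only [List.mem_map, Finset.mem_toList, Finset.mem_powerset]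
        exact ⟨_, Finset.filter_subset _ _, rfl⟩
      · have hcoe : ((Tf.filter (fun g => lab g ∈ v) : Finset (GCI Cn Rn)) : Set (GCI Cn Rn))
            = {g : GCI Cn Rn | g ∈ T ∧ lab g ∈ v} := by
          ext g
          simp [Tf, Set.Finite.mem_toFinset]
        simp only [mk, hcoe, if_pos he]
        rw [conjList_sat]
        intro p hp
        simp only [List.mem_map, Finset.mem_toList, Finset.mem_filter] at hp
        obtain ⟨g, ⟨_, hg⟩, rfl⟩ := hp
        exact hg
    · rintro ⟨φ, hφ, hsat⟩
      simp only [List.mem_map, Finset.mem_toList, Finset.mem_powerset] at hφ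
      obtain ⟨S, hS, rfl⟩ := hφ
      by_cases he : TEntails (S : Set (GCI Cn Rn)) ⟨C, D⟩
      · refine tentails_mono ?_ he
        intro g hg
        have hgS : g ∈ S := by exact_mod_cast hg
        have hgv : lab g ∈ v := by
          simp only [mk, if_pos he, conjList_sat] at hsat
          exact hsat _ (List.mem_map.2 ⟨g, Finset.mem_toList.2 hgS, rfl⟩)
        exact ⟨by rw [← hTf]; exact_mod_cast hS hgS, hgv⟩
      · simp [mk, if_neg he, MBF.sat] at hsat
end
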